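/- There exists a constant c > 0 such that for all integers j, ℓ and every β ∈ ℝ² with 2^ℓ ≤ ‖β‖ ≤ 2^(ℓ+1), the number of primitive vectors v ∈ ℤ² with nonnegative first coordinate, 2^j ≤ ‖v‖ ≤ 2^(j+1), and |v × β| ≤ 2 is at most c·max(2^(j−ℓ), 1). -/

import Mathlib

/-!
Fix one vector `u` of the set. If `v` is another one, the identity
`(u × v) ‖β‖² = (u × β)(β · v) − (v × β)(β · u)` bounds `|u × v|` by `8 · 2^(j−ℓ)`, so `u × v`
takes `O(max(2^(j−ℓ), 1))` integer values. Since `u` is primitive, vectors with the same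
cross product against `u` differ by integer multiples of `u`, and as all of them have norm
at most `2^(j+1) ≤ 2‖u‖`, each such fibre holds at most nine vectors.
-/

noncomputable def cross (u v : ℝ × ℝ) : ℝ := u.1 * v.2 - u.2 * v.1

noncomputable def enorm2 (u : ℝ × ℝ) : ℝ := Real.sqrt (u.1 ^ 2 + u.2 ^ 2)

open Set

section Pigeonhole

variable {α β : Type*}

lemma Set.ncard_le_mul_card_of_mapsTo {s : Set α} {t : Finset β} {f : α → β}
    (hf : MapsTo f s t) (n : ℕ) (hn : ∀ b ∈ t, (s ∩ f ⁻¹' {b}).ncard ≤ n) :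
    s.ncard ≤ n * t.card := by
  classical
  obtain hs | hs := s.infinite_or_finite
  · simp [hs.ncard]
  rw [ncard_eq_toFinset_card s hs]
  refine Finset.card_le_mul_card_image_of_maps_to
    (fun a ha => by simpa using hf (by simpa using ha)) n fun b hb => ?_
  rw [← ncard_coe_finset]
  convert hn b hb using 2
  ext
  simp

lemma Set.ncard_le_of_forall_eq_add_zsmul {M : Type*} [AddCommGroup M] {T : Set M} (u : M)
    (m : ℕ) (hT : ∀ v ∈ T, ∀ w ∈ T, ∃ t : ℤ, |t| ≤ m ∧ v = w + t • u) :
    T.ncard ≤ 2 * m + 1 := by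
  classical
  obtain rfl | ⟨w, hw⟩ := T.eq_empty_or_nonempty
  · simp
  have hsub : T ⊆ ((Finset.Icc (-m : ℤ) m).image fun t => w + t • u : Set M) := by
    intro v hv
    obtain ⟨t, ht, rfl⟩ := hT v hv w hw
    simpa using ⟨t, abs_le.mp ht, rfl⟩
  calc T.ncard ≤ ((Finset.Icc (-m : ℤ) m).image fun t => w + t • u).card := by
        rw [← ncard_coe_finset]; exact ncard_le_ncard hsub (Finset.finite_toSet _)
    _ ≤ (Finset.Icc (-m : ℤ) m).card := Finset.card_image_le
    _ = 2 * m + 1 := by rw [Int.card_Icc]; omega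

end Pigeonhole

lemma enorm2_nonneg (u : ℝ × ℝ) : 0 ≤ enorm2 u := Real.sqrt_nonneg _

lemma enorm2_sq (u : ℝ × ℝ) : enorm2 u ^ 2 = u.1 ^ 2 + u.2 ^ 2 :=
  Real.sq_sqrt (by positivity)

lemma abs_dot_le_enorm2_mul (u v : ℝ × ℝ) :
    |u.1 * v.1 + u.2 * v.2| ≤ enorm2 u * enorm2 v := by
  rw [enorm2, enorm2, ← Real.sqrt_mul (by positivity)]
  exact Real.abs_le_sqrt (by nlinarith [sq_nonneg (u.1 * v.2 - u.2 * v.1)])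

lemma enorm2_sub_le (v w : ℝ × ℝ) : enorm2 (v - w) ≤ enorm2 v + enorm2 w := by
  rw [enorm2, Real.sqrt_le_left (by linarith [enorm2_nonneg v, enorm2_nonneg w])]
  simp only [Prod.fst_sub, Prod.snd_sub]
  have := neg_abs_le (v.1 * w.1 + v.2 * w.2)
  nlinarith [enorm2_sq v, enorm2_sq w, abs_dot_le_enorm2_mul v w]

lemma enorm2_smul (t : ℝ) (u : ℝ × ℝ) : enorm2 (t • u) = |t| * enorm2 u := by
  rw [enorm2, enorm2, ← Real.sqrt_sq_eq_abs, ← Real.sqrt_mul (sq_nonneg t)]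
  simp only [Prod.smul_fst, Prod.smul_snd, smul_eq_mul]
  congr 1
  ring

lemma cross_mul_enorm2_sq (u v β : ℝ × ℝ) :
    cross u v * enorm2 β ^ 2 =
      cross u β * (β.1 * v.1 + β.2 * v.2) - cross v β * (β.1 * u.1 + β.2 * u.2) := by
  rw [enorm2_sq]
  simp only [cross]
  ring

lemma abs_cross_mul_enorm2_le (u v β : ℝ × ℝ) :
    |cross u v| * enorm2 β ≤ |cross u β| * enorm2 v + |cross v β| * enorm2 u := by
  rcases (enorm2_nonneg β).eq_or_lt with hβ | hβ
  · rw [← hβ, mul_zero]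
    exact add_nonneg (mul_nonneg (abs_nonneg _) (enorm2_nonneg _))
      (mul_nonneg (abs_nonneg _) (enorm2_nonneg _))
  refine le_of_mul_le_mul_right ?_ hβ
  calc |cross u v| * enorm2 β * enorm2 β = |cross u v * enorm2 β ^ 2| := by
        rw [abs_mul, abs_of_nonneg (sq_nonneg (enorm2 β))]; ring
    _ ≤ |cross u β| * |β.1 * v.1 + β.2 * v.2| + |cross v β| * |β.1 * u.1 + β.2 * u.2| := by
        rw [cross_mul_enorm2_sq, ← abs_mul, ← abs_mul]; exact abs_sub _ _
    _ ≤ |cross u β| * (enorm2 β * enorm2 v) + |cross v β| * (enorm2 β * enorm2 u) := by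
        gcongr <;> exact abs_dot_le_enorm2_mul _ _
    _ = (|cross u β| * enorm2 v + |cross v β| * enorm2 u) * enorm2 β := by ring

def intCross (u v : ℤ × ℤ) : ℤ := u.1 * v.2 - u.2 * v.1

lemma cast_intCross (u v : ℤ × ℤ) :
    (intCross u v : ℝ) = cross ((u.1 : ℝ), (u.2 : ℝ)) ((v.1 : ℝ), (v.2 : ℝ)) := by
  simp [intCross, cross]

lemma IsCoprime.exists_eq_add_zsmul_of_intCross_eq {u v w : ℤ × ℤ} (hu : IsCoprime u.1 u.2)
    (h : intCross u v = intCross u w) : ∃ t : ℤ, v = w + t • u := by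
  obtain ⟨x, y, hxy⟩ := hu
  unfold intCross at h
  refine ⟨x * (v.1 - w.1) + y * (v.2 - w.2), Prod.ext ?_ ?_⟩
  · simp only [Prod.fst_add, Prod.smul_fst, smul_eq_mul]
    linear_combination (w.1 - v.1) * hxy - y * h
  · simp only [Prod.snd_add, Prod.smul_snd, smul_eq_mul]
    linear_combination (w.2 - v.2) * hxy + x * h

def triangleSet (j : ℤ) (β : ℝ × ℝ) : Set (ℤ × ℤ) :=
  {v : ℤ × ℤ | IsCoprime v.1 v.2 ∧ 0 ≤ v.1 ∧
    (2 : ℝ) ^ j ≤ enorm2 ((v.1 : ℝ), (v.2 : ℝ)) ∧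
    enorm2 ((v.1 : ℝ), (v.2 : ℝ)) ≤ (2 : ℝ) ^ (j + 1) ∧
    |cross ((v.1 : ℝ), (v.2 : ℝ)) β| ≤ 2}

section triangleSet

variable {j ℓ : ℤ} {β : ℝ × ℝ} {u v w : ℤ × ℤ}

lemma abs_intCross_le_of_mem_triangleSet (hβ : (2 : ℝ) ^ ℓ ≤ enorm2 β)
    (hu : u ∈ triangleSet j β) (hv : v ∈ triangleSet j β) :
    |(intCross u v : ℝ)| ≤ 8 * 2 ^ (j - ℓ) := by
  obtain ⟨-, -, -, hu_le, hu_cross⟩ := hu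
  obtain ⟨-, -, -, hv_le, hv_cross⟩ := hv
  have key := abs_cross_mul_enorm2_le ((u.1 : ℝ), (u.2 : ℝ)) ((v.1 : ℝ), (v.2 : ℝ)) β
  rw [← cast_intCross] at key
  rw [zpow_sub₀ two_ne_zero, ← mul_div_assoc, le_div_iff₀ (by positivity)]
  calc |(intCross u v : ℝ)| * 2 ^ ℓ ≤ |(intCross u v : ℝ)| * enorm2 β := by gcongr
    _ ≤ 2 * 2 ^ (j + 1) + 2 * 2 ^ (j + 1) := key.trans (by gcongr <;> exact enorm2_nonneg _)
    _ = 8 * 2 ^ j := by rw [zpow_add_one₀ two_ne_zero]; ring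

lemma exists_eq_add_zsmul_of_mem_triangleSet (hu : u ∈ triangleSet j β)
    (hv : v ∈ triangleSet j β) (hw : w ∈ triangleSet j β) (h : intCross u v = intCross u w) :
    ∃ t : ℤ, |t| ≤ 4 ∧ v = w + t • u := by
  obtain ⟨t, rfl⟩ := hu.1.exists_eq_add_zsmul_of_intCross_eq h
  refine ⟨t, ?_, rfl⟩
  obtain ⟨-, -, hu_ge, -, -⟩ := hu
  obtain ⟨-, -, -, hv_le, -⟩ := hv
  obtain ⟨-, -, -, hw_le, -⟩ := hw
  have hdiff : (((w + t • u).1 : ℝ), ((w + t • u).2 : ℝ)) - ((w.1 : ℝ), (w.2 : ℝ)) =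
      (t : ℝ) • ((u.1 : ℝ), (u.2 : ℝ)) := by
    ext <;> simp
  have key :=
    enorm2_sub_le (((w + t • u).1 : ℝ), ((w + t • u).2 : ℝ)) ((w.1 : ℝ), (w.2 : ℝ))
  rw [hdiff, enorm2_smul] at key
  have : |(t : ℝ)| * 2 ^ j ≤ 4 * 2 ^ j :=
    calc |(t : ℝ)| * 2 ^ j ≤ |(t : ℝ)| * enorm2 ((u.1 : ℝ), (u.2 : ℝ)) := by gcongr
      _ ≤ 2 ^ (j + 1) + 2 ^ (j + 1) := key.trans (add_le_add hv_le hw_le)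
      _ = 4 * 2 ^ j := by rw [zpow_add_one₀ two_ne_zero]; ring
  exact_mod_cast le_of_mul_le_mul_right this (by positivity)

end triangleSet

theorem primitive_vector_triangle_count :
    ∃ c : ℝ, 0 < c ∧ ∀ (j ℓ : ℤ) (β : ℝ × ℝ),
      (2 : ℝ) ^ ℓ ≤ enorm2 β → enorm2 β ≤ (2 : ℝ) ^ (ℓ + 1) →
      (({v : ℤ × ℤ | IsCoprime v.1 v.2 ∧ 0 ≤ v.1 ∧
          (2 : ℝ) ^ j ≤ enorm2 ((v.1 : ℝ), (v.2 : ℝ)) ∧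
          enorm2 ((v.1 : ℝ), (v.2 : ℝ)) ≤ (2 : ℝ) ^ (j + 1) ∧
          |cross ((v.1 : ℝ), (v.2 : ℝ)) β| ≤ 2}).ncard : ℝ)
        ≤ c * max ((2 : ℝ) ^ (j - ℓ)) 1 := by
  refine ⟨153, by norm_num, fun j ℓ β hβ _ => ?_⟩
  change ((triangleSet j β).ncard : ℝ) ≤ _
  set m : ℝ := max (2 ^ (j - ℓ)) 1
  obtain hS | ⟨u, hu⟩ := (triangleSet j β).eq_empty_or_nonempty
  · rw [hS, ncard_empty, Nat.cast_zero]
    positivity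
  set n := ⌊8 * m⌋₊
  have hmaps : MapsTo (intCross u) (triangleSet j β) (Finset.Icc (-n : ℤ) n) := by
    intro v hv
    have : (intCross u v).natAbs ≤ n := Nat.le_floor <| by
      rw [Nat.cast_natAbs, Int.cast_abs]
      exact (abs_intCross_le_of_mem_triangleSet hβ hu hv).trans (by gcongr; exact le_max_left _ _)
    simp only [Finset.coe_Icc, mem_Icc]
    omega
  have hcount := ncard_le_mul_card_of_mapsTo hmaps (2 * 4 + 1) fun k _ =>
    ncard_le_of_forall_eq_add_zsmul u 4 fun v hv w hw =>
      exists_eq_add_zsmul_of_mem_triangleSet hu hv.1 hw.1 (hv.2.trans hw.2.symm)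
  have hcard : (Finset.Icc (-n : ℤ) n).card = 2 * n + 1 := by rw [Int.card_Icc]; omega
  rw [hcard] at hcount
  calc ((triangleSet j β).ncard : ℝ) ≤ 9 * (2 * n + 1) := by exact_mod_cast hcount
    _ ≤ 9 * (2 * (8 * m) + m) := by
        gcongr
        · exact Nat.floor_le (by positivity)
        · exact le_max_right _ _
    _ = 153 * m := by ring
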